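/- arXiv:1810.02870 — 4 statements merged into one kernel-verified Lean document; each statement's English description precedes it below -/
import Mathlib

section
/- Let E : ℕ → ℝ satisfy E(0)=0, E(1)=1, and E(n) = (E(n-2) + E(max 0 (n-3)))/2 for n ≥ 2 (interpreting E(max 0 (n-3)) as E(0)=0 when n=2). Then E(n) tends to 2/5 as n → ∞. -/
open Filter

theorem stmt_1 (E : ℕ → ℝ)
    (h0 : E 0 = 0) (h1 : E 1 = 1)
    (h2 : ∀ n, 2 ≤ n → E n = (E (n - 2) + E (n - 3)) / 2) :
    Tendsto E atTop (nhds (2 / 5)) := by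
  set step : ℝ × ℝ → ℝ × ℝ := fun p => ((-p.1 - p.2)/2, (p.1 - p.2)/2) with hstep
  set P : ℕ → ℝ × ℝ := fun n => step^[n] (-2/5, -4/5) with hP
  have hP0 : P 0 = (-2/5, -4/5) := rfl
  have hPsucc : ∀ n, P (n+1) = step (P n) := by
    intro n; simp [hP, Function.iterate_succ_apply']
  have hrec : ∀ n, (P (n+3)).1 = ((P (n+1)).1 + (P n).1) / 2 := by
    intro n
    rw [hPsucc (n+2), hPsucc (n+1), hPsucc n]
    simp only [hstep]
    ring
  have key : ∀ n, E n = 2/5 + (P n).1 := by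
    intro n
    induction n using Nat.strong_induction_on with
    | _ n ih =>
      match n with
      | 0 => rw [h0, hP0]; norm_num
      | 1 => rw [h1, hPsucc 0, hP0]; simp only [hstep]; norm_num
      | 2 =>
        rw [h2 2 (by norm_num)]
        norm_num [h0]
        rw [hPsucc 1, hPsucc 0, hP0]; simp only [hstep]; norm_num
      | (m+3) =>
        rw [h2 (m+3) (by omega)]
        have e1 : m + 3 - 2 = m + 1 := by omega
        have e2 : m + 3 - 3 = m := by omega
        rw [e1, e2, ih (m+1) (by omega), ih m (by omega), hrec m]
        ring
  have hnorm : ∀ n, (P n).1 ^ 2 + (P n).2 ^ 2 = (4/5) * (1/2) ^ n := by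
    intro n
    induction n with
    | zero => rw [hP0]; norm_num
    | succ k ihk =>
      rw [hPsucc k]
      simp only [hstep]
      linear_combination ihk / 2
  have hsp : ∀ m : ℕ, Real.sqrt ((1/2:ℝ) ^ m) = Real.sqrt (1/2) ^ m := by
    intro m
    induction m with
    | zero => simp
    | succ k ihn => rw [pow_succ, pow_succ, Real.sqrt_mul (by positivity), ihn]
  have hbound : ∀ n, |E n - 2/5| ≤ Real.sqrt (4/5) * Real.sqrt (1/2) ^ n := by
    intro n
    have h1' : E n - 2/5 = (P n).1 := by rw [key n]; ring
    rw [h1']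
    have hsq : (P n).1 ^ 2 ≤ (4/5) * (1/2) ^ n := by
      have := hnorm n
      nlinarith [sq_nonneg (P n).2]
    calc |(P n).1| = Real.sqrt ((P n).1 ^ 2) := by
          rw [Real.sqrt_sq_eq_abs]
      _ ≤ Real.sqrt ((4/5) * (1/2) ^ n) := Real.sqrt_le_sqrt hsq
      _ = Real.sqrt (4/5) * Real.sqrt (1/2) ^ n := by
          rw [Real.sqrt_mul (by norm_num), hsp n]
  have hgeo : Tendsto (fun n => Real.sqrt (4/5) * Real.sqrt (1/2) ^ n) atTop (nhds 0) := by
    have h12 : Real.sqrt (1/2) < 1 := by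
      rw [show (1:ℝ) = Real.sqrt 1 by simp]
      exact Real.sqrt_lt_sqrt (by norm_num) (by norm_num)
    have := tendsto_pow_atTop_nhds_zero_of_lt_one (Real.sqrt_nonneg _) h12
    simpa using this.const_mul (Real.sqrt (4/5))
  have hdiff : Tendsto (fun n => E n - 2/5) atTop (nhds 0) :=
    squeeze_zero_norm (fun n => by simpa using hbound n) hgeo
  have := hdiff.add_const (2/5)
  simpa using this
end

section
/- Under the same hypotheses (ℓ and r multiplicative over ▽, existence of e₁ with ℓ(e₁)=1, r(e₁)=0 and e₋₁ with ℓ(e₋₁)=0, r(e₋₁)=1), defining G = H iff for all X, ℓ(G ▽ X) = ℓ(H ▽ X) and r(G ▽ X) = r(H ▽ X), we have G = H if and only if ℓ(G) = ℓ(H) and r(G) = r(H). -/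
theorem stmt_8 {S : Type*} (nabla : S → S → S) (l r : S → ℝ)
    (hl01 : ∀ G, 0 ≤ l G ∧ l G ≤ 1) (hr01 : ∀ G, 0 ≤ r G ∧ r G ≤ 1)
    (hlmul : ∀ G H, l (nabla G H) = l G * l H)
    (hrmul : ∀ G H, r (nabla G H) = r G * r H)
    (ePos eNeg : S) (hePl : l ePos = 1) (hePr : r ePos = 0)
    (heNl : l eNeg = 0) (heNr : r eNeg = 1) :
    ∀ G H, (∀ X, l (nabla G X) = l (nabla H X) ∧ r (nabla G X) = r (nabla H X)) ↔
      (l G = l H ∧ r G = r H) := by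
  intro G H
  constructor
  · intro h
    have h1 := (h ePos).1
    have h2 := (h eNeg).2
    rw [hlmul, hlmul, hePl] at h1
    rw [hrmul, hrmul, heNr] at h2
    constructor <;> [simpa using h1; simpa using h2]
  · rintro ⟨h1, h2⟩ X
    rw [hlmul, hlmul, hrmul, hrmul, h1, h2]
    exact ⟨rfl, rfl⟩
end

section
/- Define E : ℕ → ℝ by E(0)=0, E(1)=1, E(2)=0, and E(n) = (E(n-2)+E(n-3))/2 for n ≥ 3. Then for all n, |E(n) − 2/5| ≤ (3/5)·(1/√2)^{n-2} for n ≥ 2; in particular E(n) → 2/5. -/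
open Filter

/-!
The recurrence `2 E(n+3) = E(n+1) + E(n)` has characteristic polynomial
`2x³ - x - 1 = (x - 1)(2x² + 2x + 1)`. Splitting off the root `1` gives the conserved quantity
`2 E(n+2) + 2 E(n+1) + E(n) = 2`, so `e(n) = E(n) - 2/5` satisfies `e(n+2) = -e(n+1) - e(n)/2`,
whose characteristic roots `(-1 ± i)/2` have modulus `1/√2`. The squared modulus of the
eigencomponent, `e(n+1)² + e(n) e(n+1) + e(n)²/2`, therefore halves at every step, and it
dominates `e(n)²/4`.
-/

/-- For `e (n+2) = p e (n+1) + q e n` with non-real characteristic roots `μ, μ̄`, the value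
`recForm p q (e n) (e (n+1))` is `|e (n+1) - μ e n|²`; it gets multiplied by `-q = |μ|²`. -/
def recForm (p q a b : ℝ) : ℝ := b ^ 2 - p * a * b - q * a ^ 2

section LinearRecurrence

variable {p q : ℝ} {e : ℕ → ℝ}

lemma recForm_succ (he : ∀ n, e (n + 2) = p * e (n + 1) + q * e n) (n : ℕ) :
    recForm p q (e (n + 1)) (e (n + 2)) = -q * recForm p q (e n) (e (n + 1)) := by
  rw [recForm, recForm, he n]
  ring

lemma recForm_eq_pow_mul (he : ∀ n, e (n + 2) = p * e (n + 1) + q * e n) (n : ℕ) :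
    recForm p q (e n) (e (n + 1)) = (-q) ^ n * recForm p q (e 0) (e 1) := by
  induction n with
  | zero => simp
  | succ n ih => rw [recForm_succ he, ih, pow_succ]; ring

end LinearRecurrence

lemma neg_discrim_mul_sq_le_recForm (p q a b : ℝ) :
    -(p ^ 2 + 4 * q) * a ^ 2 ≤ 4 * recForm p q a b := by
  have h : 4 * recForm p q a b = (2 * b - p * a) ^ 2 - (p ^ 2 + 4 * q) * a ^ 2 := by
    rw [recForm]; ring
  nlinarith [sq_nonneg (2 * b - p * a)]

section

variable {E : ℕ → ℝ}

lemma weighted_sum_eq (hE : ∀ n, 2 * E (n + 3) = E (n + 1) + E n) (n : ℕ) :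
    2 * E (n + 2) + 2 * E (n + 1) + E n = 2 * E 2 + 2 * E 1 + E 0 := by
  induction n with
  | zero => rfl
  | succ n ih => linarith [hE n]

lemma sub_two_fifths_sq_le (hE : ∀ n, 2 * E (n + 3) = E (n + 1) + E n)
    (h0 : E 0 = 0) (h1 : E 1 = 1) (h2 : E 2 = 0) (n : ℕ) :
    (E n - 2 / 5) ^ 2 ≤ 4 / 5 * (1 / 2) ^ n := by
  set e : ℕ → ℝ := fun n => E n - 2 / 5
  have he : ∀ n, e (n + 2) = -1 * e (n + 1) + -(1 / 2) * e n := fun n => by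
    simp only [e]
    linarith [weighted_sum_eq hE n]
  have he₀ : recForm (-1) (-(1 / 2)) (e 0) (e 1) = 1 / 5 := by
    norm_num [e, recForm, h0, h1]
  have key := neg_discrim_mul_sq_le_recForm (-1) (-(1 / 2)) (e n) (e (n + 1))
  rw [recForm_eq_pow_mul he, he₀] at key
  simp only [e] at key
  linarith

end

theorem stmt_14 (E : ℕ → ℝ)
    (h0 : E 0 = 0) (h1 : E 1 = 1) (h2 : E 2 = 0)
    (hrec : ∀ n, 3 ≤ n → E n = (E (n - 2) + E (n - 3)) / 2) :
    (∀ n, 2 ≤ n → |E n - 2 / 5| ≤ (3 / 5) * (1 / Real.sqrt 2) ^ (n - 2)) ∧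
    Tendsto E atTop (nhds (2 / 5)) := by
  have hE : ∀ n, 2 * E (n + 3) = E (n + 1) + E n := fun n => by
    have h := hrec (n + 3) (by omega)
    rw [show n + 3 - 2 = n + 1 by omega, Nat.add_sub_cancel] at h
    linarith
  have hsq : ∀ m, ((1 / Real.sqrt 2) ^ m) ^ 2 = (1 / 2) ^ m := fun m => by
    rw [← pow_mul, mul_comm, pow_mul, div_pow, Real.sq_sqrt zero_le_two, one_pow]
  have bound : ∀ n, 2 ≤ n → |E n - 2 / 5| ≤ (3 / 5) * (1 / Real.sqrt 2) ^ (n - 2) := by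
    intro n hn
    obtain ⟨m, rfl⟩ := Nat.exists_eq_add_of_le' hn
    refine abs_le_of_sq_le_sq ?_ (by positivity)
    have h := sub_two_fifths_sq_le hE h0 h1 h2 (m + 2)
    rw [pow_add] at h
    rw [Nat.add_sub_cancel, mul_pow, hsq]
    nlinarith [pow_pos (one_half_pos (α := ℝ)) m]
  refine ⟨bound, ?_⟩
  have hdecay : Tendsto (fun n => 3 / 5 * (1 / Real.sqrt 2) ^ (n - 2)) atTop (nhds 0) := by
    have h := tendsto_pow_atTop_nhds_zero_of_lt_one (by positivity)
      ((div_lt_one (by positivity)).2 Real.one_lt_sqrt_two)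
    simpa using (h.comp (tendsto_sub_atTop_nat 2)).const_mul (3 / 5 : ℝ)
  have herr : Tendsto (fun n => E n - 2 / 5) atTop (nhds 0) := by
    refine squeeze_zero_norm' ?_ hdecay
    filter_upwards [eventually_ge_atTop 2] with n hn
    exact bound n hn
  simpa using herr.add_const (2 / 5 : ℝ)
end

section
/- Let f : ℕ → ℚ satisfy f(2) = 0 and f(n) = ((n-2)/(n-1))·(1 + f(n-1)) for n ≥ 3. Then f(n) = n/2 − 1 for all n ≥ 2, and in particular f(n) → ∞ and f(n)/n → 1/2 as n → ∞. -/
/-!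
Clearing the denominator, the recurrence reads `(n - 1) f(n) = (n - 2) (1 + f(n - 1))`, and
`n / 2 - 1` satisfies it since `(n - 1)(n / 2 - 1) = (n - 2)(n - 1) / 2`; induction from `f 2 = 0`
gives the closed form, from which both limits are immediate.
-/

open Filter

theorem eq_half_sub_one_of_rec {K : Type*} [Field K] [CharZero K] (f : ℕ → K)
    (h2 : f 2 = 0)
    (hrec : ∀ n : ℕ, 3 ≤ n → f n = ((n : K) - 2) / ((n : K) - 1) * (1 + f (n - 1)))
    {n : ℕ} (hn : 2 ≤ n) : f n = (n : K) / 2 - 1 := by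
  induction n, hn using Nat.le_induction with
  | base => rw [h2]; norm_num
  | succ m hm ih =>
    have hm1 : ((m : K) + 1) - 1 ≠ 0 := by
      rw [add_sub_cancel_right, Nat.cast_ne_zero]; omega
    rw [hrec (m + 1) (by omega), Nat.add_sub_cancel, ih]
    push_cast
    field_simp
    ring

theorem tendsto_natCast_div_two_sub_one_atTop :
    Tendsto (fun n : ℕ => (n : ℝ) / 2 - 1) atTop atTop :=
  tendsto_atTop_add_const_right atTop (-1)
    ((tendsto_natCast_atTop_atTop (R := ℝ)).atTop_div_const two_pos)

theorem tendsto_natCast_div_two_sub_one_div_self :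
    Tendsto (fun n : ℕ => ((n : ℝ) / 2 - 1) / n) atTop (nhds (1 / 2)) := by
  have hsplit :
      (fun n : ℕ => 1 / 2 - 1 / (n : ℝ)) =ᶠ[atTop] fun n : ℕ => ((n : ℝ) / 2 - 1) / n := by
    filter_upwards [eventually_ne_atTop 0] with n hn
    field_simp
  refine Tendsto.congr' hsplit ?_
  simpa using (tendsto_const_nhds (x := (1 / 2 : ℝ))).sub tendsto_one_div_atTop_nhds_zero_nat

theorem stmt_17 (f : ℕ → ℚ)
    (h2 : f 2 = 0)
    (hrec : ∀ n : ℕ, 3 ≤ n →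
      f n = (((n : ℚ) - 2) / ((n : ℚ) - 1)) * (1 + f (n - 1))) :
    (∀ n : ℕ, 2 ≤ n → f n = (n : ℚ) / 2 - 1) ∧
    Tendsto (fun n : ℕ => (f n : ℝ)) atTop atTop ∧
    Tendsto (fun n : ℕ => (f n : ℝ) / (n : ℝ)) atTop (nhds (1 / 2)) := by
  have closed_form : ∀ n : ℕ, 2 ≤ n → f n = (n : ℚ) / 2 - 1 :=
    fun n hn => eq_half_sub_one_of_rec f h2 hrec hn
  have hcast : (fun n : ℕ => (n : ℝ) / 2 - 1) =ᶠ[atTop] fun n : ℕ => (f n : ℝ) := by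
    filter_upwards [eventually_ge_atTop 2] with n hn
    rw [closed_form n hn]
    push_cast
    rfl
  exact ⟨closed_form, tendsto_natCast_div_two_sub_one_atTop.congr' hcast,
    tendsto_natCast_div_two_sub_one_div_self.congr' (hcast.div EventuallyEq.rfl)⟩
end
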